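/- arXiv:2311.04320 — 5 statements merged into one kernel-verified Lean document; each statement's English description precedes it below -/
import Mathlib

section
/- Let f : ℝ → Matrix n n ℝ → Matrix n n ℝ be a (possibly time-varying) dynamics on n×n real matrices that is group affine, i.e., f_t(X₁ X₂) = f_t(X₁) X₂ + X₁ f_t(X₂) − X₁ f_t(I) X₂ for all t and all invertible n×n matrices X₁, X₂, where I is the identity matrix. Suppose X, X̄ : ℝ → Matrix n n ℝ are differentiable, X(t) and X̄(t) are invertible for every t, and both are trajectories of the dynamics: X'(t) = f_t(X(t)) and X̄'(t) = f_t(X̄(t)). Then the right-invariant error η^r(t) := X̄(t) · X(t)⁻¹ is differentiable and satisfies the trajectory-independent (autonomous) equation (η^r)'(t) = f_t(η^r(t)) − η^r(t) · f_t(I). -/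
open Matrix

attribute [local instance] Matrix.normedAddCommGroup Matrix.normedSpace

section Aux

variable {n : ℕ}

/-- Matrix multiplication as a continuous bilinear map (continuity from finite
dimensionality, so it works for the entrywise sup norm). -/
noncomputable def mulCLM (n : ℕ) :
    Matrix (Fin n) (Fin n) ℝ →L[ℝ] Matrix (Fin n) (Fin n) ℝ →L[ℝ] Matrix (Fin n) (Fin n) ℝ :=
  LinearMap.toContinuousLinearMap
    { toFun := fun A => LinearMap.toContinuousLinearMap (LinearMap.mul ℝ _ A)
      map_add' := by intro A B; ext C; simp [add_mul]
      map_smul' := by intro c A; ext C; simp [smul_mul_assoc] }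

@[simp] theorem mulCLM_apply (A B : Matrix (Fin n) (Fin n) ℝ) : mulCLM n A B = A * B := rfl

theorem matHasDerivAt_mul {u v : ℝ → Matrix (Fin n) (Fin n) ℝ}
    {u' v' : Matrix (Fin n) (Fin n) ℝ} {t : ℝ}
    (hu : HasDerivAt u u' t) (hv : HasDerivAt v v' t) :
    HasDerivAt (fun s => u s * v s) (u' * v t + u t * v') t := by
  have h1 := (mulCLM n).hasDerivAt_of_bilinear (fun _ => hu) (fun _ => hv)
  rw [add_comm]; exact h1

/-- Entry evaluation as a continuous linear map. -/
noncomputable def entryCLM (i j : Fin n) : Matrix (Fin n) (Fin n) ℝ →L[ℝ] ℝ :=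
  LinearMap.toContinuousLinearMap
    { toFun := fun A => A i j, map_add' := fun _ _ => rfl, map_smul' := fun _ _ => rfl }

theorem matEntry_differentiableAt {X : ℝ → Matrix (Fin n) (Fin n) ℝ} {A : Matrix (Fin n) (Fin n) ℝ}
    {t : ℝ} (hX : HasDerivAt X A t) (i j : Fin n) :
    DifferentiableAt ℝ (fun s => X s i j) t :=
  ((entryCLM i j).hasFDerivAt.comp_hasDerivAt t hX).differentiableAt

theorem matDet_differentiableAt {M : ℝ → Matrix (Fin n) (Fin n) ℝ} {t : ℝ}
    (h : ∀ i j, DifferentiableAt ℝ (fun s => M s i j) t) :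
    DifferentiableAt ℝ (fun s => (M s).det) t := by
  simp only [Matrix.det_apply']
  exact DifferentiableAt.fun_sum fun σ _ =>
    (DifferentiableAt.fun_finsetProd fun i _ => h (σ i) i).const_mul _

theorem matInv_differentiableAt {X : ℝ → Matrix (Fin n) (Fin n) ℝ} {A : Matrix (Fin n) (Fin n) ℝ}
    {t : ℝ} (hX : HasDerivAt X A t) (hinv : ∀ s, IsUnit (X s)) :
    DifferentiableAt ℝ (fun s => (X s)⁻¹) t := by
  have hdet : ∀ s, (X s).det ≠ 0 := fun s =>
    ((Matrix.isUnit_iff_isUnit_det (X s)).mp (hinv s)).ne_zero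
  have hentry : ∀ s, (X s)⁻¹ = (X s).det⁻¹ • (X s).adjugate := by
    intro s
    rw [Matrix.inv_def, Ring.inverse_eq_inv']
  have hadj : ∀ i j, DifferentiableAt ℝ (fun s => (X s).adjugate i j) t := by
    intro i j
    simp only [Matrix.adjugate_apply]
    apply matDet_differentiableAt
    intro i' j'
    simp only [Matrix.updateRow_apply]
    split
    · exact differentiableAt_const _
    · exact matEntry_differentiableAt hX i' j'
  have hdetd : DifferentiableAt ℝ (fun s => (X s).det) t :=
    matDet_differentiableAt (matEntry_differentiableAt hX)
  simp only [hentry]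
  refine differentiableAt_pi.mpr ?_
  intro i
  refine differentiableAt_pi.mpr ?_
  intro j
  simp only [Matrix.smul_apply, smul_eq_mul]
  exact (hdetd.inv (hdet t)).mul (hadj i j)

theorem matInv_hasDerivAt {X : ℝ → Matrix (Fin n) (Fin n) ℝ} {A : Matrix (Fin n) (Fin n) ℝ}
    {t : ℝ} (hX : HasDerivAt X A t) (hinv : ∀ s, IsUnit (X s)) :
    HasDerivAt (fun s => (X s)⁻¹) (-((X t)⁻¹ * A * (X t)⁻¹)) t := by
  have hdet : ∀ s, IsUnit (X s).det := fun s => (Matrix.isUnit_iff_isUnit_det (X s)).mp (hinv s)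
  have hZ : HasDerivAt (fun s => (X s)⁻¹) (deriv (fun s => (X s)⁻¹) t) t :=
    (matInv_differentiableAt hX hinv).hasDerivAt
  set Z' := deriv (fun s => (X s)⁻¹) t with hZ'
  have h1 : HasDerivAt (fun s => (X s)⁻¹ * X s) (Z' * X t + (X t)⁻¹ * A) t :=
    matHasDerivAt_mul hZ hX
  have h2 : (fun s => (X s)⁻¹ * X s) = fun _ => (1 : Matrix (Fin n) (Fin n) ℝ) :=
    funext fun s => Matrix.nonsing_inv_mul (X s) (hdet s)
  rw [h2] at h1
  have h3 : Z' * X t + (X t)⁻¹ * A = 0 := h1.unique (hasDerivAt_const t 1)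
  have h4 : Z' * X t = -((X t)⁻¹ * A) := by
    rw [eq_neg_iff_add_eq_zero]; exact h3
  have h5 : Z' = -((X t)⁻¹ * A * (X t)⁻¹) := by
    have := congrArg (· * (X t)⁻¹) h4
    simpa [mul_assoc, Matrix.mul_nonsing_inv (X t) (hdet t)] using this
  rwa [h5] at hZ

end Aux

/-- **Autonomous right-invariant error dynamics for group-affine systems
(Barrau–Bonnabel).** If the dynamics `f` is group affine on invertible matrices
and `X`, `X̄` are two trajectories of `f` consisting of invertible matrices, then
the right-invariant error `η^r t = X̄ t * (X t)⁻¹` satisfies the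
trajectory-independent equation `(η^r)' = f t (η^r) - η^r * f t 1`. -/
theorem rightInvariantError_autonomous
    {n : ℕ} (f : ℝ → Matrix (Fin n) (Fin n) ℝ → Matrix (Fin n) (Fin n) ℝ)
    (hf : ∀ (t : ℝ) (X₁ X₂ : Matrix (Fin n) (Fin n) ℝ), IsUnit X₁ → IsUnit X₂ →
      f t (X₁ * X₂) = f t X₁ * X₂ + X₁ * f t X₂ - X₁ * f t 1 * X₂)
    (X Xbar : ℝ → Matrix (Fin n) (Fin n) ℝ)
    (hXinv : ∀ t : ℝ, IsUnit (X t)) (hXbarinv : ∀ t : ℝ, IsUnit (Xbar t))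
    (hX : ∀ t : ℝ, HasDerivAt X (f t (X t)) t)
    (hXbar : ∀ t : ℝ, HasDerivAt Xbar (f t (Xbar t)) t) :
    ∀ t : ℝ, HasDerivAt (fun s => Xbar s * (X s)⁻¹)
      (f t (Xbar t * (X t)⁻¹) - (Xbar t * (X t)⁻¹) * f t 1) t := by
  intro t
  have hdet : IsUnit (X t).det := (Matrix.isUnit_iff_isUnit_det (X t)).mp (hXinv t)
  set A := X t with hA
  set B := (X t)⁻¹ with hB
  set E := Xbar t with hE
  have hAB : A * B = 1 := Matrix.mul_nonsing_inv (X t) hdet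
  have hBA : B * A = 1 := Matrix.nonsing_inv_mul (X t) hdet
  have hBunit : IsUnit B := (Matrix.isUnit_nonsing_inv_iff).mpr (hXinv t)
  have hprod : HasDerivAt (fun s => Xbar s * (X s)⁻¹)
      (f t E * B + E * -(B * f t A * B)) t :=
    matHasDerivAt_mul (hXbar t) (matInv_hasDerivAt (hX t) hXinv)
  have h2 := hf t B A hBunit (hXinv t)
  rw [hBA] at h2
  have h3 : f t B * A = f t 1 - B * f t A + B * f t 1 * A := by
    nth_rewrite 1 [h2]; noncomm_ring
  have hfB : f t B = f t 1 * B - B * f t A * B + B * f t 1 := by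
    have h4 := congrArg (· * B) h3
    simpa [mul_assoc, hAB, sub_mul, add_mul] using h4
  have h1 := hf t E B (hXbarinv t) hBunit
  have key : f t E * B + E * -(B * f t A * B) = f t (E * B) - E * B * f t 1 := by
    rw [h1, hfB]; noncomm_ring
  rw [← key]
  exact hprod
end

section
/- Let f : ℝ → Matrix n n ℝ → Matrix n n ℝ be a (possibly time-varying) dynamics on n×n real matrices that is group affine, i.e., f_t(X₁ X₂) = f_t(X₁) X₂ + X₁ f_t(X₂) − X₁ f_t(I) X₂ for all t and all invertible n×n matrices X₁, X₂, where I is the identity matrix. Suppose X, X̄ : ℝ → Matrix n n ℝ are differentiable, X(t) and X̄(t) are invertible for every t, and both are trajectories of the dynamics: X'(t) = f_t(X(t)) and X̄'(t) = f_t(X̄(t)). Then the left-invariant error η^l(t) := X(t)⁻¹ · X̄(t) is differentiable and satisfies the trajectory-independent (autonomous) equation (η^l)'(t) = f_t(η^l(t)) − f_t(I) · η^l(t). -/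
open Matrix

attribute [local instance] Matrix.normedAddCommGroup Matrix.normedSpace

variable {n : ℕ}

theorem mat_hasDerivAt_iff {A : ℝ → Matrix (Fin n) (Fin n) ℝ} {t : ℝ}
    {D : Matrix (Fin n) (Fin n) ℝ} :
    HasDerivAt A D t ↔ ∀ i j, HasDerivAt (fun s => A s i j) (D i j) t := by
  exact (hasDerivAt_pi (φ := A)).trans (forall_congr' fun i => hasDerivAt_pi)

theorem mat_hasDerivAt_mul {A B : ℝ → Matrix (Fin n) (Fin n) ℝ} {t : ℝ}
    {DA DB : Matrix (Fin n) (Fin n) ℝ}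
    (hA : HasDerivAt A DA t) (hB : HasDerivAt B DB t) :
    HasDerivAt (fun s => A s * B s) (DA * B t + A t * DB) t := by
  rw [mat_hasDerivAt_iff] at hA hB ⊢
  intro i j
  have h1 : ∀ s, (A s * B s) i j = ∑ k, A s i k * B s k j := fun s => Matrix.mul_apply
  simp only [h1]
  have h2 : (DA * B t + A t * DB) i j = ∑ k, (DA i k * B t k j + A t i k * DB k j) := by
    simp [Matrix.mul_apply, Matrix.add_apply, Finset.sum_add_distrib]
  rw [h2]
  exact HasDerivAt.fun_sum fun k _ => (hA i k).mul (hB k j)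

theorem mat_diff_det {A : ℝ → Matrix (Fin n) (Fin n) ℝ} {t : ℝ}
    (hA : ∀ i j, DifferentiableAt ℝ (fun s => A s i j) t) :
    DifferentiableAt ℝ (fun s => (A s).det) t := by
  simp only [Matrix.det_apply]
  apply DifferentiableAt.fun_sum
  intro σ _
  have hp : DifferentiableAt ℝ (fun s => ∏ i, A s (σ i) i) t :=
    DifferentiableAt.fun_finsetProd fun i _ => hA (σ i) i
  exact hp.const_smul (Equiv.Perm.sign σ : ℤ)

theorem mat_diff_inv {A : ℝ → Matrix (Fin n) (Fin n) ℝ} {t : ℝ}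
    (hinv : ∀ s, IsUnit (A s))
    (hA : ∀ i j, DifferentiableAt ℝ (fun s => A s i j) t) :
    ∀ i j, DifferentiableAt ℝ (fun s => (A s)⁻¹ i j) t := by
  intro i j
  have hd : ∀ s, (A s).det ≠ 0 := fun s =>
    ((Matrix.isUnit_iff_isUnit_det _).mp (hinv s)).ne_zero
  have h1 : ∀ s, (A s)⁻¹ i j = (A s).det⁻¹ * (A s).adjugate i j := by
    intro s; rw [Matrix.inv_def]; simp [Matrix.smul_apply, Ring.inverse_eq_inv']
  simp only [h1]
  apply DifferentiableAt.mul
  · exact (mat_diff_det hA).inv (hd t)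
  · simp only [Matrix.adjugate_apply]
    apply mat_diff_det
    intro k l
    by_cases hk : k = j
    · subst hk; simp only [Matrix.updateRow_self]
      exact differentiableAt_const _
    · simp only [Matrix.updateRow_ne hk]
      exact hA k l


/-- **Autonomous left-invariant error dynamics for group-affine systems
(Barrau–Bonnabel).** If the dynamics `f` is group affine on invertible matrices
and `X`, `X̄` are two trajectories of `f` consisting of invertible matrices, then
the left-invariant error `η^l t = (X t)⁻¹ * X̄ t` satisfies the
trajectory-independent equation `(η^l)' = f t (η^l) - f t 1 * η^l`. -/
theorem leftInvariantError_autonomous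
    {n : ℕ} (f : ℝ → Matrix (Fin n) (Fin n) ℝ → Matrix (Fin n) (Fin n) ℝ)
    (hf : ∀ (t : ℝ) (X₁ X₂ : Matrix (Fin n) (Fin n) ℝ), IsUnit X₁ → IsUnit X₂ →
      f t (X₁ * X₂) = f t X₁ * X₂ + X₁ * f t X₂ - X₁ * f t 1 * X₂)
    (X Xbar : ℝ → Matrix (Fin n) (Fin n) ℝ)
    (hXinv : ∀ t : ℝ, IsUnit (X t)) (hXbarinv : ∀ t : ℝ, IsUnit (Xbar t))
    (hX : ∀ t : ℝ, HasDerivAt X (f t (X t)) t)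
    (hXbar : ∀ t : ℝ, HasDerivAt Xbar (f t (Xbar t)) t) :
    ∀ t : ℝ, HasDerivAt (fun s => (X s)⁻¹ * Xbar s)
      (f t ((X t)⁻¹ * Xbar t) - f t 1 * ((X t)⁻¹ * Xbar t)) t := by
  intro t
  set Y : ℝ → Matrix (Fin n) (Fin n) ℝ := fun s => (X s)⁻¹ with hYdef
  have hdet : ∀ s, IsUnit (X s).det := fun s => (Matrix.isUnit_iff_isUnit_det _).mp (hXinv s)
  have hXY : X t * Y t = 1 := Matrix.mul_nonsing_inv _ (hdet t)
  have hYX : Y t * X t = 1 := Matrix.nonsing_inv_mul _ (hdet t)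
  have hYunit : IsUnit (Y t) := ⟨⟨Y t, X t, hYX, hXY⟩, rfl⟩
  -- Y is differentiable at t
  have hYdiff : ∀ i j, DifferentiableAt ℝ (fun s => Y s i j) t :=
    mat_diff_inv hXinv fun i j => ((mat_hasDerivAt_iff.mp (hX t)) i j).differentiableAt
  set D : Matrix (Fin n) (Fin n) ℝ := fun i j => deriv (fun s => Y s i j) t with hDdef
  have hYd : HasDerivAt Y D t := mat_hasDerivAt_iff.mpr fun i j => (hYdiff i j).hasDerivAt
  -- derivative of X * Y = 1 is zero
  have hconst : HasDerivAt (fun s => X s * Y s) 0 t := by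
    have he : (fun s => X s * Y s) = fun _ => (1 : Matrix (Fin n) (Fin n) ℝ) :=
      funext fun s => Matrix.mul_nonsing_inv _ (hdet s)
    rw [he]; exact hasDerivAt_const _ _
  have hD : f t (X t) * Y t + X t * D = 0 := (mat_hasDerivAt_mul (hX t) hYd).unique hconst
  have hXD : X t * D = -(f t (X t) * Y t) := (neg_eq_of_add_eq_zero_right hD).symm
  have hD' : D = -(Y t * f t (X t) * Y t) := by
    calc D = (Y t * X t) * D := by rw [hYX, one_mul]
    _ = Y t * (X t * D) := by rw [mul_assoc]
    _ = -(Y t * f t (X t) * Y t) := by rw [hXD]; noncomm_ring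
  -- f of the inverse
  have h2 := hf t (Y t) (X t) hYunit (hXinv t)
  rw [hYX] at h2
  have hfY : f t (Y t) = f t 1 * Y t - Y t * f t (X t) * Y t + Y t * f t 1 := by
    have := congrArg (· * Y t) h2
    simp only [sub_mul, add_mul, mul_assoc, hXY, mul_one] at this
    rw [this]; noncomm_ring
  have h1 := hf t (Y t) (Xbar t) hYunit (hXbarinv t)
  have key : f t (Y t * Xbar t) - f t 1 * (Y t * Xbar t)
      = D * Xbar t + Y t * f t (Xbar t) := by
    rw [h1, hfY, hD']; noncomm_ring
  have := mat_hasDerivAt_mul hYd (hXbar t)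
  rw [← key] at this
  exact this
end

section
/- (Closed form of Γ₁.) For every nonzero φ ∈ ℝ³, the series Γ₁(φ) := ∑_{n=0}^∞ (φ)ₓⁿ / (n+1)! converges and equals I + ((1 − cos‖φ‖)/‖φ‖²)·(φ)ₓ + ((‖φ‖ − sin‖φ‖)/‖φ‖³)·(φ)ₓ², where ‖φ‖ is the Euclidean norm of φ and I is the 3×3 identity matrix. -/
open Matrix

/-- The skew-symmetric matrix `(φ)ₓ` associated with `φ ∈ ℝ³`,
satisfying `(φ)ₓ v = φ × v`. -/
def skew3 (φ : EuclideanSpace ℝ (Fin 3)) : Matrix (Fin 3) (Fin 3) ℝ :=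
  !![0, -φ 2, φ 1; φ 2, 0, -φ 0; -φ 1, φ 0, 0]

/-- **Closed form of `Γ₁`**: for nonzero `φ ∈ ℝ³`, the series
`Γ₁(φ) = ∑ₙ (φ)ₓⁿ / (n+1)!` converges to
`I + ((1 - cos ‖φ‖) / ‖φ‖²) (φ)ₓ + ((‖φ‖ - sin ‖φ‖) / ‖φ‖³) (φ)ₓ²`. -/
theorem gamma1_closed_form (φ : EuclideanSpace ℝ (Fin 3)) (hφ : φ ≠ 0) :
    HasSum (fun n : ℕ => (((n + 1).factorial : ℝ))⁻¹ • (skew3 φ) ^ n)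
      ((1 : Matrix (Fin 3) (Fin 3) ℝ) + ((1 - Real.cos ‖φ‖) / ‖φ‖ ^ 2) • skew3 φ +
        ((‖φ‖ - Real.sin ‖φ‖) / ‖φ‖ ^ 3) • (skew3 φ) ^ 2) := by
  set A := skew3 φ with hA
  set θ := ‖φ‖ with hθ
  have hθ0 : θ ≠ 0 := norm_ne_zero_iff.mpr hφ
  have hsq : θ ^ 2 = φ 0 ^ 2 + φ 1 ^ 2 + φ 2 ^ 2 := by
    rw [hθ, EuclideanSpace.norm_eq, Real.sq_sqrt (by positivity)]
    simp [Fin.sum_univ_three]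
  have h3 : A ^ 3 = (-(θ ^ 2)) • A := by
    rw [hsq, hA]
    ext i j
    fin_cases i <;> fin_cases j <;>
      simp [skew3, pow_succ, Matrix.mul_apply, Fin.sum_univ_succ, Matrix.smul_apply] <;> ring
  have hodd : ∀ k : ℕ, A ^ (2 * k + 1) = ((-(θ ^ 2)) ^ k) • A := by
    intro k
    induction k with
    | zero => simp
    | succ n ih =>
      have he : 2 * (n + 1) + 1 = (2 * n + 1) + 2 := by ring
      rw [he, pow_add, ih, smul_mul_assoc]
      have : A * A ^ 2 = A ^ 3 := by rw [← pow_succ']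
      rw [this, h3, smul_smul, ← pow_succ]
  have heven : ∀ k : ℕ, A ^ (2 * k + 2) = ((-(θ ^ 2)) ^ k) • A ^ 2 := by
    intro k
    have he : 2 * k + 2 = (2 * k + 1) + 1 := by ring
    rw [he, pow_succ, hodd, smul_mul_assoc, ← pow_two]
  -- shifted cos series
  have hcos' : HasSum (fun n : ℕ => (-1 : ℝ) ^ n * θ ^ (2 * n) / ((2 * n).factorial))
      ((Real.cos θ - 1) + ∑ i ∈ Finset.range 1, (-1 : ℝ) ^ i * θ ^ (2 * i) / ((2 * i).factorial)) := by
    simpa using Real.hasSum_cos θ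
  have hshiftc := (hasSum_nat_add_iff 1).mpr hcos'
  have hsin' : HasSum (fun n : ℕ => (-1 : ℝ) ^ n * θ ^ (2 * n + 1) / ((2 * n + 1).factorial))
      ((Real.sin θ - θ) + ∑ i ∈ Finset.range 1, (-1 : ℝ) ^ i * θ ^ (2 * i + 1) / ((2 * i + 1).factorial)) := by
    simpa using Real.hasSum_sin θ
  have hshifts := (hasSum_nat_add_iff 1).mpr hsin'
  have hc1 : HasSum (fun k : ℕ => (-(θ ^ 2)) ^ k * (((2 * k + 2).factorial : ℝ))⁻¹)
      ((1 - Real.cos θ) / θ ^ 2) := by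
    have h := hshiftc.div_const (-(θ ^ 2))
    convert h using 1
    · rfl
    · funext k
      have hfac : (((2 * (k + 1)).factorial : ℝ)) ≠ 0 := by
        exact_mod_cast (Nat.factorial_ne_zero _)
      have he : 2 * (k + 1) = 2 * k + 2 := by ring
      rw [he] at hfac ⊢
      field_simp
      ring
    · field_simp
      ring
  have hc2 : HasSum (fun k : ℕ => (-(θ ^ 2)) ^ k * (((2 * k + 3).factorial : ℝ))⁻¹)
      ((θ - Real.sin θ) / θ ^ 3) := by
    have h := hshifts.div_const (-(θ ^ 3))
    convert h using 1
    · rfl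
    · funext k
      have hfac : (((2 * (k + 1) + 1).factorial : ℝ)) ≠ 0 := by
        exact_mod_cast (Nat.factorial_ne_zero _)
      have he : 2 * (k + 1) + 1 = 2 * k + 3 := by ring
      rw [he] at hfac ⊢
      field_simp
      ring
    · field_simp
      ring
  have hS1 : HasSum (fun k : ℕ => (((2 * k + 2).factorial : ℝ))⁻¹ • A ^ (2 * k + 1))
      (((1 - Real.cos θ) / θ ^ 2) • A) := by
    have h := hc1.smul_const A
    convert h using 1
    funext k
    rw [hodd k, smul_smul, mul_comm]
  have hS2 : HasSum (fun k : ℕ => (((2 * k + 3).factorial : ℝ))⁻¹ • A ^ (2 * k + 2))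
      (((θ - Real.sin θ) / θ ^ 3) • A ^ 2) := by
    have h := hc2.smul_const (A ^ 2)
    convert h using 1
    funext k
    rw [heven k, smul_smul, mul_comm]
  have hg : HasSum (fun n : ℕ => (((n + 1 + 1).factorial : ℝ))⁻¹ • A ^ (n + 1))
      (((1 - Real.cos θ) / θ ^ 2) • A + ((θ - Real.sin θ) / θ ^ 3) • A ^ 2) := by
    apply HasSum.even_add_odd
    · exact hS1
    · exact hS2
  have hf := (hasSum_nat_add_iff (f := fun n : ℕ => (((n + 1).factorial : ℝ))⁻¹ • A ^ n) 1).mp hg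
  have hzero : ∑ i ∈ Finset.range 1, (((i + 1).factorial : ℝ))⁻¹ • A ^ i = 1 := by simp
  rw [hzero] at hf
  convert hf using 1
  · rfl
  abel
end

section
/- (Closed form of Γ₂.) For every nonzero φ ∈ ℝ³, the series Γ₂(φ) := ∑_{n=0}^∞ (φ)ₓⁿ / (n+2)! converges and equals (1/2)·I + ((‖φ‖ − sin‖φ‖)/‖φ‖³)·(φ)ₓ + ((‖φ‖² + 2cos‖φ‖ − 2)/(2‖φ‖⁴))·(φ)ₓ², where ‖φ‖ is the Euclidean norm of φ and I is the 3×3 identity matrix. -/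
open Matrix

lemma skew3_cube (φ : EuclideanSpace ℝ (Fin 3)) :
    skew3 φ ^ 3 = (-‖φ‖ ^ 2) • skew3 φ := by
  have h : ‖φ‖ ^ 2 = φ 0 ^ 2 + φ 1 ^ 2 + φ 2 ^ 2 := by
    rw [EuclideanSpace.norm_eq, Real.sq_sqrt (by positivity)]
    simp [Fin.sum_univ_three, sq_abs]
  ext i j
  fin_cases i <;> fin_cases j <;>
    simp [skew3, pow_succ, Matrix.mul_apply, Fin.sum_univ_three, h] <;> ring

lemma skew3_pow_odd (φ : EuclideanSpace ℝ (Fin 3)) (k : ℕ) :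
    skew3 φ ^ (2 * k + 1) = ((-‖φ‖ ^ 2) ^ k) • skew3 φ := by
  induction k with
  | zero => simp
  | succ k ih =>
      have h : 2 * (k + 1) + 1 = (2 * k + 1) + 2 := by ring
      rw [h, pow_add, ih, smul_mul_assoc, ← pow_succ' (skew3 φ) 2,
        skew3_cube, smul_smul, ← pow_succ]

lemma skew3_pow_even (φ : EuclideanSpace ℝ (Fin 3)) (k : ℕ) :
    skew3 φ ^ (2 * k + 2) = ((-‖φ‖ ^ 2) ^ k) • skew3 φ ^ 2 := by
  have h : 2 * k + 2 = (2 * k + 1) + 1 := by ring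
  rw [h, pow_succ, skew3_pow_odd, smul_mul_assoc, ← pow_two]

lemma sin_series (θ : ℝ) (hθ : θ ≠ 0) :
    HasSum (fun k : ℕ => (-θ ^ 2) ^ k / ((2 * k + 3).factorial : ℝ))
      ((θ - Real.sin θ) / θ ^ 3) := by
  have h := Real.hasSum_sin θ
  have h1 := (hasSum_nat_add_iff (f := fun m : ℕ =>
      (-1 : ℝ) ^ m * θ ^ (2 * m + 1) / ((2 * m + 1).factorial : ℝ))
      (g := Real.sin θ - θ) 1).2 (by simpa using h)
  have h2 := h1.mul_right (-1 / θ ^ 3)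
  convert h2 using 1
  · rfl
  · funext k
    have he : 2 * (k + 1) + 1 = 2 * k + 3 := by ring
    rw [he]
    have hf : ((2 * k + 3).factorial : ℝ) ≠ 0 :=
      Nat.cast_ne_zero.2 (Nat.factorial_ne_zero _)
    have hp : (-θ ^ 2) ^ k = (-1 : ℝ) ^ k * θ ^ (2 * k) := by rw [neg_pow, pow_mul]
    have hq : θ ^ (2 * k + 3) = θ ^ (2 * k) * θ ^ 3 := pow_add θ (2 * k) 3
    rw [hp, hq]
    field_simp
    ring
  · field_simp
    ring

lemma cos_series (θ : ℝ) (hθ : θ ≠ 0) :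
    HasSum (fun k : ℕ => (-θ ^ 2) ^ k / ((2 * k + 4).factorial : ℝ))
      ((θ ^ 2 + 2 * Real.cos θ - 2) / (2 * θ ^ 4)) := by
  have h := Real.hasSum_cos θ
  have h1 := (hasSum_nat_add_iff (f := fun m : ℕ =>
      (-1 : ℝ) ^ m * θ ^ (2 * m) / ((2 * m).factorial : ℝ))
      (g := Real.cos θ - 1 + θ ^ 2 / 2) 2).2 (by
        have : Real.cos θ - 1 + θ ^ 2 / 2 + ∑ i ∈ Finset.range 2,
            (-1 : ℝ) ^ i * θ ^ (2 * i) / ((2 * i).factorial : ℝ) = Real.cos θ := by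
          simp [Finset.sum_range_succ, Nat.factorial]
          ring
        rw [this]; exact h)
  have h2 := h1.mul_right (1 / θ ^ 4)
  convert h2 using 1
  · rfl
  · funext k
    have he : 2 * (k + 2) = 2 * k + 4 := by ring
    rw [he]
    have hf : ((2 * k + 4).factorial : ℝ) ≠ 0 :=
      Nat.cast_ne_zero.2 (Nat.factorial_ne_zero _)
    have hp : (-θ ^ 2) ^ k = (-1 : ℝ) ^ k * θ ^ (2 * k) := by rw [neg_pow, pow_mul]
    have hq : θ ^ (2 * k + 4) = θ ^ (2 * k) * θ ^ 4 := pow_add θ (2 * k) 4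
    rw [hp, hq]
    field_simp
    ring
  · field_simp
    ring

/-- **Closed form of `Γ₂`**: for nonzero `φ ∈ ℝ³`, the series
`Γ₂(φ) = ∑ₙ (φ)ₓⁿ / (n+2)!` converges to
`(1/2) I + ((‖φ‖ - sin ‖φ‖) / ‖φ‖³) (φ)ₓ + ((‖φ‖² + 2 cos ‖φ‖ - 2) / (2 ‖φ‖⁴)) (φ)ₓ²`. -/
theorem gamma2_closed_form (φ : EuclideanSpace ℝ (Fin 3)) (hφ : φ ≠ 0) :
    HasSum (fun n : ℕ => (((n + 2).factorial : ℝ))⁻¹ • (skew3 φ) ^ n)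
      ((1 / 2 : ℝ) • (1 : Matrix (Fin 3) (Fin 3) ℝ) +
        ((‖φ‖ - Real.sin ‖φ‖) / ‖φ‖ ^ 3) • skew3 φ +
        ((‖φ‖ ^ 2 + 2 * Real.cos ‖φ‖ - 2) / (2 * ‖φ‖ ^ 4)) • (skew3 φ) ^ 2) := by
  set θ := ‖φ‖ with hθdef
  have hθ : θ ≠ 0 := norm_ne_zero_iff.2 hφ
  set A := skew3 φ with hA
  -- coefficient functions
  set a : ℕ → ℝ := fun n => if n = 0 then (1 / 2 : ℝ) else 0 with ha_def
  set b : ℕ → ℝ := fun n =>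
    if Odd n then (-θ ^ 2) ^ (n / 2) / (((n + 2).factorial : ℝ)) else 0 with hb_def
  set c : ℕ → ℝ := fun n =>
    if Even n ∧ n ≠ 0 then (-θ ^ 2) ^ (n / 2 - 1) / (((n + 2).factorial : ℝ)) else 0 with hc_def
  have hsa : HasSum (fun n => a n • (1 : Matrix (Fin 3) (Fin 3) ℝ))
      ((1 / 2 : ℝ) • (1 : Matrix (Fin 3) (Fin 3) ℝ)) := by
    convert hasSum_ite_eq (0 : ℕ) ((1 / 2 : ℝ) • (1 : Matrix (Fin 3) (Fin 3) ℝ)) using 1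
    funext n
    by_cases h : n = 0 <;> simp [ha_def, h]
  have hbsum : HasSum b ((θ - Real.sin θ) / θ ^ 3) := by
    have hinj : Function.Injective (fun k : ℕ => 2 * k + 1) := fun x y h => by
      simp only [] at h; omega
    refine (Function.Injective.hasSum_iff hinj ?_).1 ?_
    · intro x hx
      have hne : ¬ Odd x := by
        rintro ⟨m, hm⟩
        exact hx ⟨m, show 2 * m + 1 = x by omega⟩
      simp [hb_def, hne]
    · convert sin_series θ hθ using 1
      funext k
      have h1 : Odd (2 * k + 1) := ⟨k, by ring⟩
      have h2 : (2 * k + 1) / 2 = k := by omega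
      have h3 : 2 * k + 1 + 2 = 2 * k + 3 := by ring
      simp only [Function.comp, hb_def, if_pos h1, h2, h3]
  have hcsum : HasSum c ((θ ^ 2 + 2 * Real.cos θ - 2) / (2 * θ ^ 4)) := by
    have hinj : Function.Injective (fun k : ℕ => 2 * k + 2) := fun x y h => by
      simp only [] at h; omega
    refine (Function.Injective.hasSum_iff hinj ?_).1 ?_
    · intro x hx
      have hne : ¬ (Even x ∧ x ≠ 0) := by
        rintro ⟨⟨m, hm⟩, hx0⟩
        exact hx ⟨m - 1, show 2 * (m - 1) + 2 = x by omega⟩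
      simp [hc_def, hne]
    · convert cos_series θ hθ using 1
      funext k
      have h1 : Even (2 * k + 2) ∧ 2 * k + 2 ≠ 0 := ⟨⟨k + 1, by ring⟩, by omega⟩
      have h2 : (2 * k + 2) / 2 - 1 = k := by omega
      have h3 : 2 * k + 2 + 2 = 2 * k + 4 := by ring
      simp only [Function.comp, hc_def, if_pos h1, h2, h3]
  have hsb := hbsum.smul_const A
  have hsc := hcsum.smul_const (A ^ 2)
  have htot := (hsa.add hsb).add hsc
  convert htot using 1
  funext n
  rcases Nat.even_or_odd n with he | ho
  · obtain ⟨m, hm⟩ := he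
    rcases Nat.eq_zero_or_pos n with h0 | hpos
    · subst h0
      have hno : ¬ Odd (0 : ℕ) := by decide
      have hnc : ¬ (Even (0 : ℕ) ∧ (0 : ℕ) ≠ 0) := by decide
      simp [ha_def, hb_def, hc_def, hno, hnc, Nat.factorial]
    · obtain ⟨k, hk⟩ : ∃ k, n = 2 * k + 2 := ⟨m - 1, by omega⟩
      subst hk
      have hno : ¬ Odd (2 * k + 2) := by
        rintro ⟨j, hj⟩; omega
      have hyc : Even (2 * k + 2) ∧ 2 * k + 2 ≠ 0 := ⟨⟨k + 1, by ring⟩, by omega⟩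
      have hd : (2 * k + 2) / 2 - 1 = k := by omega
      rw [skew3_pow_even φ k]
      simp only [ha_def, hb_def, hc_def, if_neg hno, if_pos hyc,
        if_neg (by omega : ¬ (2 * k + 2 = 0)), hd, zero_smul, add_zero, zero_add,
        smul_smul, ← hA, ← hθdef]
      rw [div_eq_mul_inv, mul_comm]
  · obtain ⟨k, hk⟩ := ho
    have hk' : n = 2 * k + 1 := by omega
    subst hk'
    have hyo : Odd (2 * k + 1) := ⟨k, by ring⟩
    have hnc : ¬ (Even (2 * k + 1) ∧ 2 * k + 1 ≠ 0) := by
      rintro ⟨⟨j, hj⟩, -⟩; omega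
    have hd : (2 * k + 1) / 2 = k := by omega
    rw [skew3_pow_odd φ k]
    simp only [ha_def, hb_def, hc_def, if_pos hyo, if_neg hnc,
      if_neg (by omega : ¬ (2 * k + 1 = 0)), hd, zero_smul, add_zero, zero_add,
      smul_smul, ← hA, ← hθdef]
    rw [div_eq_mul_inv, mul_comm]
end

section
/- (Exact error identity of the left-invariant EKF update.) Let X, X̄ be invertible n×n real matrices (the true and estimated states), let b, V ∈ ℝⁿ (the known measurement vector and the measurement noise), and let the left-invariant observation be Y := X b + V. Let L : ℝⁿ → Matrix n n ℝ be any linear map (the gain composed with the wedge map into the Lie algebra), and define the updated estimate X̄⁺ := X̄ · exp(L(X̄⁻¹ Y − b)). Then the updated left-invariant error η^{l+} := X⁻¹ X̄⁺ satisfies exactly η^{l+} = η^l · exp(L((η^l)⁻¹ b − b + X̄⁻¹ V)), where η^l := X⁻¹ X̄ is the left-invariant error before the update. -/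
open Matrix NormedSpace

/-- **Exact error identity of the left-invariant EKF update.**
With left-invariant observation `Y = X *ᵥ b + V` and update
`X̄⁺ = X̄ * exp (L (X̄⁻¹ *ᵥ Y - b))`, the updated left-invariant error
`η^{l+} = X⁻¹ * X̄⁺` equals `η^l * exp (L ((η^l)⁻¹ *ᵥ b - b + X̄⁻¹ *ᵥ V))`,
where `η^l = X⁻¹ * X̄`. -/
theorem liekf_update_error_identity {n : ℕ}
    (X Xbar : Matrix (Fin n) (Fin n) ℝ) (hX : IsUnit X) (hXbar : IsUnit Xbar)
    (b V : Fin n → ℝ) (L : (Fin n → ℝ) →ₗ[ℝ] Matrix (Fin n) (Fin n) ℝ) :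
    X⁻¹ * (Xbar * exp (L (Xbar⁻¹ *ᵥ (X *ᵥ b + V) - b))) =
      (X⁻¹ * Xbar) *
        exp (L ((X⁻¹ * Xbar)⁻¹ *ᵥ b - b + Xbar⁻¹ *ᵥ V)) := by
  have harg : Xbar⁻¹ *ᵥ (X *ᵥ b + V) - b
      = (X⁻¹ * Xbar)⁻¹ *ᵥ b - b + Xbar⁻¹ *ᵥ V := by
    rw [Matrix.mul_inv_rev, Matrix.nonsing_inv_nonsing_inv _ ((Matrix.isUnit_iff_isUnit_det X).mp hX),
      mulVec_add, ← mulVec_mulVec]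
    abel
  rw [harg, mul_assoc]
end
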